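/- Fix n ≥ 1 and a constant k with k ≥ 1/n, and for an n-simplex σ define f_n(σ) = max over vertices v of σ of |h(v, σ)/R(σ) − k|, where h(v, σ) is the signed distance from the circumcenter of σ to the hyperplane of the facet opposite v and R(σ) is the circumradius. Then for every n-simplex σ in a Euclidean space, f_n(σ) ≥ k − 1/n; that is, the value k − 1/n attained by a regular n-simplex is a lower bound of f_n over all n-simplices. -/

import Mathlib

open EuclideanGeometry RealInnerProductSpace

variable {E : Type*} [NormedAddCommGroup E] [InnerProductSpace ℝ E] [FiniteDimensional ℝ E]

/-- The facet of an `(n+1)`-simplex opposite vertex `i`. -/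
noncomputable def Affine.Simplex.facetOpp {n : ℕ} (σ : Affine.Simplex ℝ E (n + 1))
    (i : Fin (n + 2)) : Affine.Simplex ℝ E n :=
  σ.face (fs := {i}ᶜ)
    (by rw [Finset.card_compl, Finset.card_singleton, Fintype.card_fin]; rfl)

/-- A simplex is well-centered if its circumcenter is a positive affine
combination of its vertices, i.e. lies in the interior of the simplex. -/
def Affine.Simplex.WellCentered {n : ℕ} (σ : Affine.Simplex ℝ E n) : Prop :=
  ∃ w : Fin (n + 1) → ℝ, (∀ j, 0 < w j) ∧ (∑ j, w j = 1) ∧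
    σ.circumcenter = Finset.univ.affineCombination ℝ σ.points w

/-- The signed distance from the circumcenter of `σ` to the hyperplane spanned by the
facet opposite vertex `i`, positive when the circumcenter is on the same side as vertex `i`. -/
noncomputable def Affine.Simplex.signedDist {n : ℕ} (σ : Affine.Simplex ℝ E (n + 1))
    (i : Fin (n + 2)) : ℝ :=
  ⟪σ.circumcenter - ((σ.facetOpp i).circumcenter : E),
      σ.points i - (((σ.facetOpp i).orthogonalProjectionSpan (σ.points i) : E))⟫ /
    ‖σ.points i - (((σ.facetOpp i).orthogonalProjectionSpan (σ.points i) : E))‖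

/-!
Write the circumcenter in barycentric coordinates `w`. Its signed distance to the facet opposite
`vᵢ` is `hᵢ = wᵢ aᵢ`, where `aᵢ` is the height of `vᵢ`. The signed distance to that facet is
1-Lipschitz and takes the values `aᵢ` at `vᵢ` and `hᵢ` at the circumcenter, so `aᵢ ≤ R + hᵢ`.
If every `hᵢ` exceeded `R / n`, then `aᵢ < (n + 1) hᵢ`, i.e. `wᵢ > 1 / (n + 1)` for all `n + 1`
vertices, contradicting `∑ wᵢ = 1`. So some `hᵢ / R ≤ 1 / n`, and then `|hᵢ / R - k| ≥ k - 1 / n`.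
-/

namespace Affine.Simplex

section

variable {V P : Type*} [NormedAddCommGroup V] [InnerProductSpace ℝ V] [MetricSpace P]
  [NormedAddTorsor V P] {n : ℕ} [NeZero n]

lemma signedInfDist_affineCombination_eq_mul_height (s : Simplex ℝ P n) (i : Fin (n + 1))
    {w : Fin (n + 1) → ℝ} (hw : ∑ j, w j = 1) :
    s.signedInfDist i (Finset.univ.affineCombination ℝ s.points w) = w i * s.height i := by
  rw [s.signedInfDist_affineCombination i hw, height, altitudeFoot, dist_eq_norm_vsub]

lemma height_le_dist_add_signedInfDist (s : Simplex ℝ P n) (i : Fin (n + 1)) (p : P) :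
    s.height i ≤ dist p (s.points i) + s.signedInfDist i p := by
  have hself : s.signedInfDist i (s.points i) = s.height i := by
    rw [signedInfDist_apply_self, height, altitudeFoot, dist_eq_norm_vsub]
  have hdiff : s.signedInfDist i (s.points i) - s.signedInfDist i p ≤ dist p (s.points i) := by
    rw [signedInfDist, AffineSubspace.signedInfDist_def, signedDist_triangle_left]
    exact signedDist_le_dist _ _ _
  linarith

lemma exists_signedInfDist_circumcenter_le (s : Simplex ℝ P n) :
    ∃ i, s.signedInfDist i s.circumcenter ≤ s.circumradius / n := by
  by_contra! hfar
  obtain ⟨w, hw, hc⟩ :=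
    eq_affineCombination_of_mem_affineSpan_of_fintype s.circumcenter_mem_affineSpan
  have hn : (0 : ℝ) < n := by exact_mod_cast Nat.pos_of_neZero n
  have hweight : ∀ i, 1 / ((n : ℝ) + 1) < w i := by
    intro i
    have hh := s.signedInfDist_affineCombination_eq_mul_height i hw
    rw [← hc] at hh
    have hle := s.height_le_dist_add_signedInfDist i s.circumcenter
    rw [dist_circumcenter_eq_circumradius', hh] at hle
    have hR : s.circumradius < n * (w i * s.height i) := by
      rw [← hh]; exact (div_lt_iff₀' hn).mp (hfar i)
    have hpos := s.height_pos i
    rw [div_lt_iff₀ (by positivity)]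
    nlinarith
  have hsum : (1 : ℝ) < ∑ j, w j :=
    calc (1 : ℝ) = ∑ _j : Fin (n + 1), 1 / ((n : ℝ) + 1) := by simp [field]
      _ < ∑ j, w j := Finset.sum_lt_sum_of_nonempty Finset.univ_nonempty fun j _ => hweight j
  exact hsum.ne' hw

end

omit [FiniteDimensional ℝ E] in
lemma signedDist_eq_signedInfDist_circumcenter {n : ℕ}
    (σ : Affine.Simplex ℝ E (n + 1)) (i : Fin (n + 2)) :
    σ.signedDist i = σ.signedInfDist i σ.circumcenter := by
  have hc : (σ.faceOpposite i).circumcenter ∈ affineSpan ℝ (σ.points '' {i}ᶜ) := by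
    rw [← range_faceOpposite_points]
    exact circumcenter_mem_affineSpan _
  rw [signedInfDist, AffineSubspace.signedInfDist_eq_signedDist_of_mem hc, signedDist_apply_apply]
  change ⟪σ.circumcenter - (σ.faceOpposite i).circumcenter,
      σ.points i - (σ.faceOpposite i).orthogonalProjectionSpan (σ.points i)⟫ /
    ‖σ.points i - (σ.faceOpposite i).orthogonalProjectionSpan (σ.points i)‖ = _
  simp [orthogonalProjectionSpan, NormedSpace.normalize, real_inner_smul_right, div_eq_inv_mul,
    real_inner_comm]

end Affine.Simplex

theorem regular_simplex_minimizes_f_general {n : ℕ} (k : ℝ)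
    (σ : Affine.Simplex ℝ E (n + 1)) :
    k - 1 / (n + 1 : ℝ) ≤
      Finset.univ.sup' Finset.univ_nonempty
        (fun i : Fin (n + 2) => |σ.signedDist i / σ.circumradius - k|) := by
  obtain ⟨i, hi⟩ := σ.exists_signedInfDist_circumcenter_le
  rw [← σ.signedDist_eq_signedInfDist_circumcenter] at hi
  have hratio : σ.signedDist i / σ.circumradius ≤ 1 / (n + 1 : ℝ) := by
    rw [div_le_iff₀ σ.circumradius_pos, one_div_mul_eq_div]
    exact_mod_cast hi
  calc k - 1 / (n + 1 : ℝ) ≤ |σ.signedDist i / σ.circumradius - k| :=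
        (by linarith : k - 1 / (n + 1 : ℝ) ≤ -(σ.signedDist i / σ.circumradius - k)).trans
          (neg_le_abs _)
    _ ≤ _ := Finset.le_sup' (fun j => |σ.signedDist j / σ.circumradius - k|) (Finset.mem_univ i)

/-- For `k ≥ 1/(n+1)`, the quantity
`fₙ(σ) = max_i |h(vᵢ, σ)/R(σ) − k|` is bounded below by `k − 1/(n+1)`
(the value attained by a regular `(n+1)`-simplex) for every `(n+1)`-simplex `σ`. -/
theorem regular_simplex_minimizes_f {n : ℕ} (k : ℝ) (hk : 1 / (n + 1 : ℝ) ≤ k)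
    (σ : Affine.Simplex ℝ E (n + 1)) :
    k - 1 / (n + 1 : ℝ) ≤
      Finset.univ.sup' Finset.univ_nonempty
        (fun i : Fin (n + 2) => |σ.signedDist i / σ.circumradius - k|) :=
  regular_simplex_minimizes_f_general k σ
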